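/- arXiv:0908.2256 — 2 statements merged into one kernel-verified Lean document; each statement's English description precedes it below -/
import Mathlib

section
/- Let x ∈ [0,1]^n be feasible for the strengthened LP of a k-column-sparse packing instance, let α > 0, set ℓ = (4αk)^{1/3}, assume αk ≥ 2 (so that ℓ ≥ 2 and x_i/(αk) ≤ 1), and let S include each item i independently with probability x_i/(αk). For i ∈ [n] and j ∈ N(i), let E_{ij} be the event that Σ_{i' ∈ S : s_{i'j} ≥ s_{ij}} s_{i'j} > 1. If item i is medium for constraint j (i.e. 1/ℓ ≤ s_{ij} ≤ 1/2), then Pr[E_{ij} | i ∈ S] ≤ (1/(αk)) · (1 + ℓ²/(2αk)). -/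
open Finset
open scoped Classical BigOperators

/-- Probability of the subset `T` under the product distribution on subsets of
`Fin n` with marginal probabilities `q`. -/
noncomputable def prodP {n : ℕ} (q : Fin n → ℝ) (T : Finset (Fin n)) : ℝ :=
  (∏ i ∈ T, q i) * ∏ i ∈ Tᶜ, (1 - q i)

/-- Probability of an event under the product distribution with marginals `q`. -/
noncomputable def prE {n : ℕ} (q : Fin n → ℝ) (E : Finset (Fin n) → Prop) : ℝ :=
  ∑ T : Finset (Fin n), if E T then prodP q T else 0

section Helpers

variable {n : ℕ}

lemma ite_irrel {α : Sort*} {c : Prop} (h1 h2 : Decidable c) (a b : α) :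
    @ite α c h1 a b = @ite α c h2 a b := by
  cases Subsingleton.elim h1 h2
  rfl

lemma prE_eq_filter (q : Fin n → ℝ) (E : Finset (Fin n) → Prop) [DecidablePred E] :
    prE q E = ∑ T ∈ univ.filter E, prodP q T := by
  unfold prE
  rw [Finset.sum_filter]
  exact Finset.sum_congr rfl fun T _ => ite_irrel _ _ _ _

lemma prodP_nonneg {q : Fin n → ℝ} (hq : ∀ a, 0 ≤ q a ∧ q a ≤ 1) (T : Finset (Fin n)) :
    0 ≤ prodP q T := by
  unfold prodP
  apply mul_nonneg
  · exact Finset.prod_nonneg fun a _ => (hq a).1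
  · exact Finset.prod_nonneg fun a _ => by linarith [(hq a).2]

lemma prE_congr {q : Fin n → ℝ} {E F : Finset (Fin n) → Prop}
    (h : ∀ T, E T ↔ F T) : prE q E = prE q F := by
  unfold prE
  exact Finset.sum_congr rfl fun T _ => by rw [show E T = F T from propext (h T)]

lemma prE_mono {q : Fin n → ℝ} (hq : ∀ a, 0 ≤ q a ∧ q a ≤ 1)
    {E F : Finset (Fin n) → Prop} (h : ∀ T, E T → F T) :
    prE q E ≤ prE q F := by
  apply Finset.sum_le_sum
  intro T _
  by_cases hE : E T
  · simp [hE, h T hE]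
  · simp only [hE, if_false]
    split_ifs
    · exact prodP_nonneg hq T
    · exact le_rfl

lemma prE_or {q : Fin n → ℝ} (hq : ∀ a, 0 ≤ q a ∧ q a ≤ 1)
    (E F : Finset (Fin n) → Prop) :
    prE q (fun T => E T ∨ F T) ≤ prE q E + prE q F := by
  unfold prE
  rw [← Finset.sum_add_distrib]
  apply Finset.sum_le_sum
  intro T _
  have h0 := prodP_nonneg hq T
  by_cases hE : E T <;> by_cases hF : F T <;> simp [hE, hF] <;> linarith

lemma prE_exists {ι : Type*} {q : Fin n → ℝ} (hq : ∀ a, 0 ≤ q a ∧ q a ≤ 1)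
    (A : Finset ι) (P : ι → Finset (Fin n) → Prop) :
    prE q (fun T => ∃ a ∈ A, P a T) ≤ ∑ a ∈ A, prE q (fun T => P a T) := by
  unfold prE
  rw [Finset.sum_comm]
  apply Finset.sum_le_sum
  intro T _
  show @ite ℝ (∃ a ∈ A, P a T) (Classical.propDecidable _) (prodP q T) 0
      ≤ ∑ b ∈ A, @ite ℝ (P b T) (Classical.propDecidable _) (prodP q T) 0
  have h0 := prodP_nonneg hq T
  have hterm : ∀ b ∈ A, (0:ℝ) ≤ if P b T then prodP q T else 0 := by
    intro b _
    split_ifs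
    · exact h0
    · exact le_rfl
  by_cases h : ∃ a ∈ A, P a T
  · obtain ⟨a, ha, hPa⟩ := h
    rw [if_pos (⟨a, ha, hPa⟩ : ∃ a ∈ A, P a T)]
    calc prodP q T = (if P a T then prodP q T else 0) := by rw [if_pos hPa]
      _ ≤ ∑ b ∈ A, (if P b T then prodP q T else 0) :=
        Finset.single_le_sum hterm ha
  · rw [if_neg h]
    exact Finset.sum_nonneg hterm

lemma prE_superset (q : Fin n → ℝ) (A : Finset (Fin n)) :
    prE q (fun T => A ⊆ T) = ∏ a ∈ A, q a := by
  rw [prE_eq_filter]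
  have hbij : ∑ T ∈ univ.filter (fun T => A ⊆ T), prodP q T
      = ∑ T' ∈ Aᶜ.powerset, (∏ a ∈ A, q a) *
          ((∏ a ∈ T', q a) * ∏ a ∈ Aᶜ \ T', (1 - q a)) := by
    apply Finset.sum_nbij' (i := fun T => T \ A) (j := fun T' => A ∪ T')
    · intro T hT
      rw [Finset.mem_powerset]
      intro a ha
      rw [Finset.mem_compl]
      exact (Finset.mem_sdiff.mp ha).2
    · intro T' _
      simp [Finset.subset_union_left]
    · intro T hT
      simp only [Finset.mem_filter] at hT
      exact Finset.union_sdiff_of_subset hT.2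
    · intro T' hT'
      rw [Finset.mem_powerset] at hT'
      apply Finset.union_sdiff_cancel_left
      rw [Finset.disjoint_left]
      intro a haA haT'
      exact (Finset.mem_compl.mp (hT' haT')) haA
    · intro T hT
      simp only [Finset.mem_filter] at hT
      unfold prodP
      have hd : Disjoint A (T \ A) := Finset.disjoint_sdiff
      have h1 : T = A ∪ (T \ A) := (Finset.union_sdiff_of_subset hT.2).symm
      have h2 : Tᶜ = Aᶜ \ (T \ A) := by
        ext a
        simp only [Finset.mem_compl, Finset.mem_sdiff]
        constructor
        · intro ha
          refine ⟨fun haA => ha (hT.2 haA), fun hc => ha hc.1⟩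
        · intro ⟨ha1, ha2⟩ haT
          exact ha2 ⟨haT, ha1⟩
      have h3 : ∏ a ∈ T, q a = (∏ a ∈ A, q a) * ∏ a ∈ T \ A, q a := by
        conv_lhs => rw [h1]
        rw [Finset.prod_union hd]
      rw [h3, h2]
      ring
  rw [hbij, ← Finset.mul_sum]
  have hone : ∑ T' ∈ Aᶜ.powerset, (∏ a ∈ T', q a) * ∏ a ∈ Aᶜ \ T', (1 - q a) = 1 := by
    rw [← Finset.prod_add]
    apply Finset.prod_eq_one
    intro a _
    ring
  rw [hone, mul_one]

lemma pair_sum_le (M : Finset (Fin n)) (q : Fin n → ℝ) (hq : ∀ a, 0 ≤ q a) :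
    2 * ∑ p ∈ (M ×ˢ M).filter (fun p => p.1 < p.2), q p.1 * q p.2
      ≤ (∑ a ∈ M, q a) ^ 2 := by
  have hsq : (∑ a ∈ M, q a) ^ 2 = ∑ p ∈ M ×ˢ M, q p.1 * q p.2 := by
    rw [sq, Finset.sum_mul_sum, Finset.sum_product]
  have hsplit := Finset.sum_filter_add_sum_filter_not (M ×ˢ M)
    (fun p => p.1 < p.2) (fun p => q p.1 * q p.2)
  have hswap : ∑ p ∈ (M ×ˢ M).filter (fun p => p.1 < p.2), q p.1 * q p.2
      = ∑ p ∈ (M ×ˢ M).filter (fun p => p.2 < p.1), q p.1 * q p.2 := by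
    apply Finset.sum_nbij' (i := fun p => (p.2, p.1)) (j := fun p => (p.2, p.1))
    · intro p hp
      simp only [Finset.mem_filter, Finset.mem_product] at hp ⊢
      exact ⟨⟨hp.1.2, hp.1.1⟩, hp.2⟩
    · intro p hp
      simp only [Finset.mem_filter, Finset.mem_product] at hp ⊢
      exact ⟨⟨hp.1.2, hp.1.1⟩, hp.2⟩
    · intro p _; rfl
    · intro p _; rfl
    · intro p _; ring
  have hsub : ∑ p ∈ (M ×ˢ M).filter (fun p => p.2 < p.1), q p.1 * q p.2
      ≤ ∑ p ∈ (M ×ˢ M).filter (fun p => ¬ p.1 < p.2), q p.1 * q p.2 := by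
    apply Finset.sum_le_sum_of_subset_of_nonneg
    · intro p hp
      rw [Finset.mem_filter] at hp ⊢
      exact ⟨hp.1, not_lt_of_gt hp.2⟩
    · intro p _ _
      exact mul_nonneg (hq _) (hq _)
  nlinarith [hsq, hsplit, hswap, hsub]

end Helpers

/-- with `ℓ = (4αk)^{1/3}`, if item `i` is medium for constraint
`j` (i.e. `1/ℓ ≤ s i j ≤ 1/2`), then
`Pr[E_ij | i ∈ S] ≤ (1/(αk))(1 + ℓ²/(2αk))` (stated in multiplied-out form,
i.e. multiplied through by `Pr[i ∈ S]`), where `x` is feasible for the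
strengthened LP. -/
theorem medium_item_bound (n m k : ℕ) (s : Fin n → Fin m → ℝ)
    (hs : ∀ i j, s i j ∈ Set.Icc (0:ℝ) 1)
    (hsparse : ∀ i, ((univ : Finset (Fin m)).filter (fun j => 0 < s i j)).card ≤ k)
    (x : Fin n → ℝ) (hx : ∀ i, x i ∈ Set.Icc (0:ℝ) 1)
    (hLP : ∀ j, ∑ i, s i j * x i ≤ 1)
    (hLPbig : ∀ j, ∑ i ∈ univ.filter (fun i => 1/2 < s i j), x i ≤ 1)
    (α : ℝ) (hα : 0 < α) (hαk : 2 ≤ α * k)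
    (ℓ : ℝ) (hℓ : ℓ = (4 * α * k) ^ ((1:ℝ)/3))
    (q : Fin n → ℝ) (hq : ∀ i, q i = x i / (α * k))
    (i : Fin n) (j : Fin m) (hmed : 1/ℓ ≤ s i j ∧ s i j ≤ 1/2) :
    prE q (fun T =>
        (1 < ∑ i' ∈ T.filter (fun i'' => s i j ≤ s i'' j), s i' j) ∧ i ∈ T)
      ≤ (1 / (α * k)) * (1 + ℓ^2 / (2 * α * k)) * prE q (fun T => i ∈ T) := by
  have hαk0 : (0:ℝ) < α * k := lt_of_lt_of_le two_pos hαk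
  have hℓpos : 0 < ℓ := by
    rw [hℓ]
    apply Real.rpow_pos_of_pos
    nlinarith
  have hq01 : ∀ a, 0 ≤ q a ∧ q a ≤ 1 := by
    intro a
    rw [hq a]
    constructor
    · exact div_nonneg (hx a).1 (le_of_lt hαk0)
    · rw [div_le_one hαk0]
      linarith [(hx a).2]
  -- index sets
  set B : Finset (Fin n) := univ.filter (fun b => 1/2 < s b j) with hB
  set M : Finset (Fin n) := univ.filter (fun a => s i j ≤ s a j ∧ s a j ≤ 1/2) with hM
  set P : Finset (Fin n × Fin n) := (univ ×ˢ univ).filter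
      (fun p => p.1 < p.2 ∧ p.1 ≠ i ∧ p.2 ≠ i ∧
        (s i j ≤ s p.1 j ∧ s p.1 j ≤ 1/2) ∧ (s i j ≤ s p.2 j ∧ s p.2 j ≤ 1/2)) with hP
  -- combinatorial claim
  have hclaim : ∀ T : Finset (Fin n),
      ((1 < ∑ i' ∈ T.filter (fun i'' => s i j ≤ s i'' j), s i' j) ∧ i ∈ T) →
      ((∃ b ∈ B, b ∈ T ∧ i ∈ T) ∨ (∃ p ∈ P, p.1 ∈ T ∧ p.2 ∈ T ∧ i ∈ T)) := by
    intro T ⟨hsum, hiT⟩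
    set F := T.filter (fun i'' => s i j ≤ s i'' j) with hF
    by_cases hbig : ∃ b ∈ F, 1/2 < s b j
    · obtain ⟨b, hbF, hb⟩ := hbig
      left
      refine ⟨b, ?_, (Finset.mem_filter.mp hbF).1, hiT⟩
      rw [hB, Finset.mem_filter]
      exact ⟨Finset.mem_univ b, hb⟩
    · right
      push_neg at hbig
      have hiF : i ∈ F := Finset.mem_filter.mpr ⟨hiT, le_refl _⟩
      have hcard : 2 ≤ (F.erase i).card := by
        by_contra hc
        push_neg at hc
        have hFcard : F.card ≤ 2 := by
          have := Finset.card_erase_add_one hiF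
          omega
        have : ∑ i' ∈ F, s i' j ≤ F.card • (1/2 : ℝ) :=
          Finset.sum_le_card_nsmul F _ _ (fun a ha => hbig a ha)
        have h2 : (F.card : ℝ) ≤ 2 := by exact_mod_cast hFcard
        rw [nsmul_eq_mul] at this
        nlinarith
      obtain ⟨a, haF, b, hbF, hab⟩ := Finset.one_lt_card.mp (by omega : 1 < (F.erase i).card)
      have hmemT : ∀ c ∈ F.erase i, c ∈ T ∧ c ≠ i ∧ s i j ≤ s c j ∧ s c j ≤ 1/2 := by
        intro c hc
        have hc' := Finset.mem_of_mem_erase hc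
        have hcF := Finset.mem_filter.mp hc'
        exact ⟨hcF.1, Finset.ne_of_mem_erase hc, hcF.2, hbig c hc'⟩
      obtain ⟨haT, hai, ha1, ha2⟩ := hmemT a haF
      obtain ⟨hbT, hbi, hb1, hb2⟩ := hmemT b hbF
      rcases lt_or_gt_of_ne hab with h | h
      · exact ⟨(a, b), by
          rw [hP, Finset.mem_filter]
          exact ⟨Finset.mem_product.mpr ⟨Finset.mem_univ _, Finset.mem_univ _⟩,
            h, hai, hbi, ⟨ha1, ha2⟩, ⟨hb1, hb2⟩⟩, haT, hbT, hiT⟩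
      · exact ⟨(b, a), by
          rw [hP, Finset.mem_filter]
          exact ⟨Finset.mem_product.mpr ⟨Finset.mem_univ _, Finset.mem_univ _⟩,
            h, hbi, hai, ⟨hb1, hb2⟩, ⟨ha1, ha2⟩⟩, hbT, haT, hiT⟩
  -- union bound
  have hstep1 : prE q (fun T =>
        (1 < ∑ i' ∈ T.filter (fun i'' => s i j ≤ s i'' j), s i' j) ∧ i ∈ T)
      ≤ prE q (fun T => ∃ b ∈ B, b ∈ T ∧ i ∈ T)
        + prE q (fun T => ∃ p ∈ P, p.1 ∈ T ∧ p.2 ∈ T ∧ i ∈ T) := by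
    calc prE q (fun T =>
        (1 < ∑ i' ∈ T.filter (fun i'' => s i j ≤ s i'' j), s i' j) ∧ i ∈ T)
        ≤ prE q (fun T => (∃ b ∈ B, b ∈ T ∧ i ∈ T) ∨ (∃ p ∈ P, p.1 ∈ T ∧ p.2 ∈ T ∧ i ∈ T)) :=
          prE_mono hq01 hclaim
      _ ≤ _ := prE_or hq01 _ _
  -- bound the single-item events
  have hsingle : ∀ b ∈ B, prE q (fun T => b ∈ T ∧ i ∈ T) = q b * q i := by
    intro b hbB
    have hbi : b ≠ i := by
      rw [hB, Finset.mem_filter] at hbB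
      intro h
      rw [h] at hbB
      linarith [hmed.2, hbB.2]
    have : prE q (fun T => b ∈ T ∧ i ∈ T) = prE q (fun T => ({b, i} : Finset (Fin n)) ⊆ T) := by
      apply prE_congr
      intro T
      simp [Finset.insert_subset_iff]
    rw [this, prE_superset, Finset.prod_pair hbi]
  have hbigsum : ∑ b ∈ B, prE q (fun T => b ∈ T ∧ i ∈ T) ≤ (1 / (α * k)) * q i := by
    rw [Finset.sum_congr rfl hsingle, ← Finset.sum_mul]
    apply mul_le_mul_of_nonneg_right _ (hq01 i).1
    have : ∑ b ∈ B, q b = (∑ b ∈ B, x b) / (α * k) := by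
      rw [Finset.sum_div]
      exact Finset.sum_congr rfl fun b _ => hq b
    rw [this, one_div]
    rw [div_eq_mul_inv]
    apply mul_le_of_le_one_left (inv_nonneg.mpr (le_of_lt hαk0))
    exact hLPbig j
  -- bound the pair events
  have hpair : ∀ p ∈ P, prE q (fun T => p.1 ∈ T ∧ p.2 ∈ T ∧ i ∈ T) = q p.1 * q p.2 * q i := by
    intro p hpP
    rw [hP, Finset.mem_filter] at hpP
    obtain ⟨-, h12, h1i, h2i, -, -⟩ := hpP
    have : prE q (fun T => p.1 ∈ T ∧ p.2 ∈ T ∧ i ∈ T)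
        = prE q (fun T => ({p.1, p.2, i} : Finset (Fin n)) ⊆ T) := by
      apply prE_congr
      intro T
      simp [Finset.insert_subset_iff]
    rw [this, prE_superset]
    rw [Finset.prod_insert, Finset.prod_pair h2i]
    · ring
    · simp only [Finset.mem_insert, Finset.mem_singleton]
      push_neg
      exact ⟨ne_of_lt h12, h1i⟩
  have hMsum : ∑ a ∈ M, q a ≤ ℓ / (α * k) := by
    have h1 : ∀ a ∈ M, q a ≤ ℓ * (s a j * x a) / (α * k) := by
      intro a haM
      rw [hM, Finset.mem_filter] at haM
      rw [hq a]
      apply div_le_div_of_nonneg_right _ hαk0.le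
      have hsa : 1/ℓ ≤ s a j := le_trans hmed.1 haM.2.1
      have : 1 ≤ ℓ * s a j := by
        rw [div_le_iff₀ hℓpos] at hsa
        linarith
      nlinarith [(hx a).1, (hx a).2]
    calc ∑ a ∈ M, q a ≤ ∑ a ∈ M, ℓ * (s a j * x a) / (α * k) := Finset.sum_le_sum h1
      _ = ℓ * (∑ a ∈ M, s a j * x a) / (α * k) := by
          rw [Finset.mul_sum, Finset.sum_div]
      _ ≤ ℓ * 1 / (α * k) := by
          apply div_le_div_of_nonneg_right _ hαk0.le
          apply mul_le_mul_of_nonneg_left _ (le_of_lt hℓpos)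
          calc ∑ a ∈ M, s a j * x a ≤ ∑ a, s a j * x a := by
                apply Finset.sum_le_sum_of_subset_of_nonneg (Finset.subset_univ M)
                intro a _ _
                exact mul_nonneg (hs a j).1 (hx a).1
            _ ≤ 1 := hLP j
      _ = ℓ / (α * k) := by rw [mul_one]
  have hpairsum : ∑ p ∈ P, prE q (fun T => p.1 ∈ T ∧ p.2 ∈ T ∧ i ∈ T)
      ≤ (ℓ^2 / (2 * (α * k)^2)) * q i := by
    rw [Finset.sum_congr rfl hpair, ← Finset.sum_mul]
    apply mul_le_mul_of_nonneg_right _ (hq01 i).1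
    have hsub : P ⊆ (M ×ˢ M).filter (fun p => p.1 < p.2) := by
      intro p hp
      rw [hP, Finset.mem_filter] at hp
      obtain ⟨-, h12, -, -, h1, h2⟩ := hp
      rw [Finset.mem_filter, Finset.mem_product, hM]
      exact ⟨⟨Finset.mem_filter.mpr ⟨Finset.mem_univ _, h1⟩,
        Finset.mem_filter.mpr ⟨Finset.mem_univ _, h2⟩⟩, h12⟩
    have h1 : ∑ p ∈ P, q p.1 * q p.2
        ≤ ∑ p ∈ (M ×ˢ M).filter (fun p => p.1 < p.2), q p.1 * q p.2 := by
      apply Finset.sum_le_sum_of_subset_of_nonneg hsub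
      intro p _ _
      exact mul_nonneg (hq01 _).1 (hq01 _).1
    have h2 := pair_sum_le M q (fun a => (hq01 a).1)
    have h3 : (∑ a ∈ M, q a)^2 ≤ (ℓ / (α * k))^2 := by
      apply pow_le_pow_left₀ (Finset.sum_nonneg fun a _ => (hq01 a).1) hMsum
    have h4 : (ℓ / (α * k))^2 = ℓ^2 / (α * k)^2 := by
      rw [div_pow]
    have h5 : ℓ^2 / (2 * (α * k)^2) = ℓ^2 / (α * k)^2 / 2 := by
      ring
    linarith
  -- marginal
  have hmarg : prE q (fun T => i ∈ T) = q i := by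
    have : prE q (fun T => i ∈ T) = prE q (fun T => ({i} : Finset (Fin n)) ⊆ T) := by
      apply prE_congr
      intro T
      simp
    rw [this, prE_superset, Finset.prod_singleton]
  -- put it together
  have hexB := prE_exists hq01 B (fun b T => b ∈ T ∧ i ∈ T)
  have hexP := prE_exists hq01 P (fun p T => p.1 ∈ T ∧ p.2 ∈ T ∧ i ∈ T)
  rw [hmarg]
  have hqi : 0 ≤ q i := (hq01 i).1
  have hfinal : (1 / (α * k)) * q i + (ℓ^2 / (2 * (α * k)^2)) * q i
      = (1 / (α * k)) * (1 + ℓ^2 / (2 * α * k)) * q i := by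
    have hk0 : (k:ℝ) ≠ 0 := by
      intro h
      rw [h, mul_zero] at hαk
      linarith
    field_simp
  linarith [hstep1, le_trans hexB hbigsum, le_trans hexP hpairsum]
end

section
/- Let f : 2^{[n]} → ℝ_{≥0} be a monotone submodular function with multilinear extension F, let x ∈ [0,1]^n and p ∈ [0,1], and let S be a random subset of [n] including each item i independently with probability p·x_i. Then E[f(S)] ≥ p·F(x). -/
open Finset
open scoped Classical BigOperators

/-- Expectation of `g(S)` where `S` is drawn from the product distribution with
marginals `q`.  In particular `exV x f` is the multilinear extension `F(x)`
of the set function `f`. -/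
noncomputable def exV {n : ℕ} (q : Fin n → ℝ) (g : Finset (Fin n) → ℝ) : ℝ :=
  ∑ T : Finset (Fin n), prodP q T * g T

/-!
Sample `S` in two stages: draw `T` with marginals `x`, then keep each element of `T`
independently with probability `p`; the result has marginals `p • x`. So it suffices that the
`p`-subsample `R` of a fixed set `T` has `E f(R) ≥ p f(T) + (1 - p) f(∅)`. This goes by induction
on `T`: adding an element `a` splits the subsample by whether `a` is kept, and the induction
hypotheses for `f` and for `S ↦ f (insert a S)` combine through the submodular inequality
`f (insert a T) + f ∅ ≤ f {a} + f T`.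
-/

section Subsampling

variable {α : Type*} [DecidableEq α]

def IsSubmodular (f : Finset α → ℝ) : Prop :=
  ∀ A B, f (A ∪ B) + f (A ∩ B) ≤ f A + f B

theorem IsSubmodular.comp_insert {f : Finset α → ℝ} (hf : IsSubmodular f) (a : α) :
    IsSubmodular fun S => f (insert a S) := fun A B => by
  simpa only [insert_union_distrib, insert_inter_distrib] using hf (insert a A) (insert a B)

/-- The probability that keeping each element of `T` independently with probability `p`
leaves exactly `R` (for `R ⊆ T`). -/
noncomputable def subsampleProb (p : ℝ) (T R : Finset α) : ℝ :=
  p ^ #R * (1 - p) ^ #(T \ R)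

theorem subsampleProb_insert_of_notMem {p : ℝ} {T R : Finset α} {a : α} (haT : a ∉ T)
    (haR : a ∉ R) : subsampleProb p (insert a T) R = (1 - p) * subsampleProb p T R := by
  have : a ∉ T \ R := fun h => haT (mem_sdiff.1 h).1
  rw [subsampleProb, subsampleProb, insert_sdiff_of_notMem _ haR, card_insert_of_notMem this]
  ring

theorem subsampleProb_insert_insert {p : ℝ} {T R : Finset α} {a : α} (haT : a ∉ T)
    (haR : a ∉ R) : subsampleProb p (insert a T) (insert a R) = p * subsampleProb p T R := by
  rw [subsampleProb, subsampleProb, insert_sdiff_insert, sdiff_insert_of_notMem haT,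
    card_insert_of_notMem haR]
  ring

theorem IsSubmodular.le_sum_subsampleProb_mul {f : Finset α → ℝ} (hf : IsSubmodular f) {p : ℝ}
    (hp : p ∈ Set.Icc (0 : ℝ) 1) (T : Finset α) :
    p * f T + (1 - p) * f ∅ ≤ ∑ R ∈ T.powerset, subsampleProb p T R * f R := by
  induction T using Finset.induction_on generalizing f with
  | empty =>
    simp only [powerset_empty, subsampleProb, empty_sdiff, card_empty, pow_zero, sum_singleton]
    exact le_of_eq (by ring)
  | insert a T haT ih =>
    have hsplit : f (insert a T) + f ∅ ≤ f {a} + f T := by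
      simpa [← insert_eq, singleton_inter_of_notMem haT] using hf {a} T
    have hpq : 0 ≤ p * (1 - p) := mul_nonneg hp.1 (sub_nonneg.2 hp.2)
    have ih₀ := ih hf
    have ih₁ := ih (hf.comp_insert a)
    simp only [insert_empty] at ih₁
    rw [sum_powerset_insert haT]
    calc p * f (insert a T) + (1 - p) * f ∅
        ≤ (1 - p) * (p * f T + (1 - p) * f ∅) + p * (p * f (insert a T) + (1 - p) * f {a}) := by
          nlinarith [mul_le_mul_of_nonneg_left hsplit hpq]
      _ ≤ (1 - p) * ∑ R ∈ T.powerset, subsampleProb p T R * f R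
          + p * ∑ R ∈ T.powerset, subsampleProb p T R * f (insert a R) := by
          gcongr
          · linarith [hp.2]
          · exact hp.1
      _ = _ := by
          rw [mul_sum, mul_sum]
          congr 1 <;> refine sum_congr rfl fun R hR => ?_
          · rw [subsampleProb_insert_of_notMem haT fun h => haT (mem_powerset.1 hR h)]; ring
          · rw [subsampleProb_insert_insert haT fun h => haT (mem_powerset.1 hR h)]; ring

end Subsampling

section ProductMeasure

variable {n : ℕ}

theorem prodP_nonneg_s13 {x : Fin n → ℝ} (hx : ∀ i, x i ∈ Set.Icc (0 : ℝ) 1) (T : Finset (Fin n)) :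
    0 ≤ prodP x T :=
  mul_nonneg (prod_nonneg fun i _ => (hx i).1) (prod_nonneg fun i _ => sub_nonneg.2 (hx i).2)

theorem sum_superset_prodP_mul_subsampleProb (x : Fin n → ℝ) (p : ℝ) (R : Finset (Fin n)) :
    ∑ T with R ⊆ T, prodP x T * subsampleProb p T R = prodP (fun i => p * x i) R := by
  -- Expanding the product of the left sides of `hfactor` by `Fintype.prod_add` gives a sum over
  -- `T` in which the terms with `R ⊄ T` vanish.
  have hfactor : ∀ i, x i * (if i ∈ R then p else 1 - p) + (if i ∈ R then 0 else 1 - x i) =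
      if i ∈ R then p * x i else 1 - p * x i := fun i => by split_ifs <;> ring
  have hterm : ∀ T : Finset (Fin n),
      (∏ i ∈ T, x i * (if i ∈ R then p else 1 - p)) * ∏ i ∈ Tᶜ, (if i ∈ R then 0 else 1 - x i) =
        if R ⊆ T then prodP x T * subsampleProb p T R else 0 := by
    intro T
    split_ifs with hRT
    · have hRc : ∀ i ∈ Tᶜ, (if i ∈ R then 0 else 1 - x i) = 1 - x i :=
        fun i hi => if_neg fun hiR => mem_compl.1 hi (hRT hiR)
      rw [prod_congr rfl hRc, prod_mul_distrib, prod_ite, filter_mem_eq_inter,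
        inter_eq_right.2 hRT, filter_notMem_eq_sdiff, prod_const, prod_const, prodP, subsampleProb]
      ring
    · obtain ⟨i, hiR, hiT⟩ := not_subset.1 hRT
      exact mul_eq_zero_of_right _ (prod_eq_zero (mem_compl.2 hiT) (if_pos hiR))
  rw [sum_filter, ← sum_congr rfl fun T _ => hterm T, ← Fintype.prod_add,
    prod_congr rfl fun i _ => hfactor i, prod_ite, filter_mem_eq_inter, filter_notMem_eq_sdiff,
    univ_inter, ← compl_eq_univ_sdiff, prodP]

theorem exV_const_mul_eq_sum_subsample (x : Fin n → ℝ) (p : ℝ)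
    (g : Finset (Fin n) → ℝ) :
    exV (fun i => p * x i) g =
      ∑ T, prodP x T * ∑ R ∈ T.powerset, subsampleProb p T R * g R := by
  simp_rw [mul_sum, ← mul_assoc]
  rw [sum_comm' (t' := univ) (s' := fun R => {T | R ⊆ T}) (by simp)]
  simp_rw [← sum_mul, sum_superset_prodP_mul_subsampleProb, exV]

end ProductMeasure

theorem scaled_sampling_multilinear_general (n : ℕ) (f : Finset (Fin n) → ℝ)
    (hsub : ∀ A B : Finset (Fin n), f (A ∪ B) + f (A ∩ B) ≤ f A + f B)
    (hnn : ∀ A : Finset (Fin n), 0 ≤ f A)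
    (x : Fin n → ℝ) (hx : ∀ i, x i ∈ Set.Icc (0:ℝ) 1)
    (p : ℝ) (hp : p ∈ Set.Icc (0:ℝ) 1)
    (q : Fin n → ℝ) (hq : ∀ i, q i = p * x i) :
    exV q f ≥ p * exV x f := by
  have hsample (T : Finset (Fin n)) : p * f T ≤ ∑ R ∈ T.powerset, subsampleProb p T R * f R := by
    have := IsSubmodular.le_sum_subsampleProb_mul hsub hp T
    linarith [mul_nonneg (sub_nonneg.2 hp.2) (hnn ∅)]
  calc p * exV x f = ∑ T, prodP x T * (p * f T) := by
        simp only [exV, mul_sum, mul_left_comm]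
    _ ≤ ∑ T, prodP x T * ∑ R ∈ T.powerset, subsampleProb p T R * f R :=
        sum_le_sum fun T _ => mul_le_mul_of_nonneg_left (hsample T) (prodP_nonneg_s13 hx T)
    _ = exV q f := by
        rw [funext hq, exV_const_mul_eq_sum_subsample]

/-- for a nonnegative monotone submodular `f` with multilinear
extension `F`, if each item is sampled independently with probability `p·x i`
then `E[f(S)] ≥ p·F(x)`. -/
theorem scaled_sampling_multilinear (n : ℕ) (f : Finset (Fin n) → ℝ)
    (hmono : ∀ A B : Finset (Fin n), A ⊆ B → f A ≤ f B)
    (hsub : ∀ A B : Finset (Fin n), f (A ∪ B) + f (A ∩ B) ≤ f A + f B)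
    (hnn : ∀ A : Finset (Fin n), 0 ≤ f A)
    (x : Fin n → ℝ) (hx : ∀ i, x i ∈ Set.Icc (0:ℝ) 1)
    (p : ℝ) (hp : p ∈ Set.Icc (0:ℝ) 1)
    (q : Fin n → ℝ) (hq : ∀ i, q i = p * x i) :
    exV q f ≥ p * exV x f :=
  scaled_sampling_multilinear_general n f hsub hnn x hx p hp q hq
end
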